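/- Let L = D^r − Σ_{m=0}^{r−2} u_m(x)D^m and let Q = (L^{1/r})^k for some k ≥ 0, with decomposition Q = Q_+ + Q_− into differential and purely negative parts. Then [Q_+, L] = −[Q_−, L], and consequently [Q_+, L] is a differential operator of order not exceeding r−2. -/

import Mathlib

/-!
STATEMENT 3. The commutator identity for the differential part of fractional powers.
Formal pseudodifferential operator calculus is set up as in the paper:
`L^{1/r} = D + ∑_{m>0} w_m D^{-m}` denotes the unique pseudodifferential `r`-th root of
`L = D^r - ∑_{m=0}^{r-2} u_m D^m`.  We work with formal pseudodifferential operators over an arbitrary commutative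
`ℚ`-algebra `A` of "functions", equipped with a derivation `d` recording the action of
`D = (i/√r) ∂/∂x` on coefficients (so `D ∘ f = f ∘ D + (d f)`).
-/

open scoped BigOperators

/-- Formal pseudodifferential operators with coefficients in `A`:
`P : PDO A` represents `∑ₖ (P k) · Dᵏ` (the support in positive degrees of all operators
we consider below is finite, so all composition formulas are finite sums; we use `finsum`
to express them uniformly). -/
abbrev PDO (A : Type*) := ℤ → A

namespace PDO

variable {A : Type*} [CommRing A] [Algebra ℚ A]

/-- The generalized binomial coefficient `(k choose j)` for `k : ℤ`, `j : ℕ`. -/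
noncomputable def zbinom (k : ℤ) (j : ℕ) : ℚ :=
  (∏ i ∈ Finset.range j, ((k : ℚ) - (i : ℚ))) / (Nat.factorial j : ℚ)

/-- Composition of pseudodifferential operators, determined by the Leibniz rule
`Dᵏ ∘ f = ∑_{j ≥ 0} (k choose j) (dʲ f) ∘ D^{k-j}`, where `d` is the action of `D`
on coefficient functions. -/
noncomputable def mul (d : A → A) (P Q : PDO A) : PDO A := fun m =>
  ∑ᶠ (k : ℤ) (l : ℤ),
    if 0 ≤ k + l - m then
      zbinom k (k + l - m).toNat • (P k * d^[(k + l - m).toNat] (Q l))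
    else 0

/-- The identity operator `D^0`. -/
def one : PDO A := fun m => if m = 0 then 1 else 0

/-- Powers of a pseudodifferential operator. -/
noncomputable def pow (d : A → A) (P : PDO A) : ℕ → PDO A
  | 0 => one
  | n + 1 => mul d P (pow d P n)

/-- The commutator `[P, Q]`. -/
noncomputable def bracket (d : A → A) (P Q : PDO A) : PDO A :=
  mul d P Q - mul d Q P

/-- The differential part `Q₊` of a pseudodifferential operator. -/
def posPart (Q : PDO A) : PDO A := fun m => if 0 ≤ m then Q m else 0

/-- The purely negative part `Q₋ = Q - Q₊`. -/
def negPart (Q : PDO A) : PDO A := fun m => if m < 0 then Q m else 0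

/-- The residue: the coefficient of `D^{-1}`. -/
def res (Q : PDO A) : A := Q (-1)

/-- The operator `L = D^r - ∑_{m=0}^{r-2} u_m D^m`. -/
def lax (r : ℕ) (u : ℕ → A) : PDO A := fun m =>
  if m = (r : ℤ) then 1 else if 0 ≤ m ∧ m ≤ (r : ℤ) - 2 then -u m.toNat else 0

/-- `P` has the shape `D + ∑_{m>0} w_m D^{-m}`. -/
def IsRootShape (P : PDO A) : Prop :=
  P 1 = 1 ∧ ∀ m : ℤ, 0 ≤ m → m ≠ 1 → P m = 0

/-- `P` is an `r`-th root `L^{1/r}` of `L = D^r - ∑_{m=0}^{r-2} u_m D^m`, i.e. `P` has the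
shape `D + ∑_{m>0} w_m D^{-m}` and `P^r = L`. -/
def IsRoot (d : A → A) (r : ℕ) (u : ℕ → A) (P : PDO A) : Prop :=
  IsRootShape P ∧ pow d P r = lax r u

end PDO

namespace PDO
open Finset

lemma zbinom_zero (k : ℤ) : zbinom k 0 = 1 := by simp [zbinom]

lemma zbinom_zero_succ (j : ℕ) : zbinom 0 (j+1) = 0 := by
  have h0 : (0:ℕ) ∈ Finset.range (j+1) := Finset.mem_range.2 (Nat.succ_pos j)
  simp [zbinom, Finset.prod_eq_zero h0]

lemma zbinom_pascal (k : ℤ) (j : ℕ) :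
    zbinom (k+1) (j+1) = zbinom k (j+1) + zbinom k j := by
  have hfac : ((Nat.factorial (j+1) : ℚ)) ≠ 0 := by
    exact_mod_cast Nat.factorial_ne_zero (j+1)
  have hfac' : ((Nat.factorial j : ℚ)) ≠ 0 := by
    exact_mod_cast Nat.factorial_ne_zero j
  have h1 : ∏ i ∈ Finset.range (j+1), (((k+1:ℤ):ℚ) - (i:ℚ))
      = (∏ i ∈ Finset.range j, ((k:ℚ) - (i:ℚ))) * ((k:ℚ)+1) := by
    rw [Finset.prod_range_succ' (fun i => (((k+1:ℤ):ℚ) - (i:ℚ))) j]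
    congr 1
    · refine Finset.prod_congr rfl fun i _ => ?_
      push_cast; ring
    · push_cast; ring
  have h2 : ∏ i ∈ Finset.range (j+1), ((k:ℚ) - (i:ℚ))
      = (∏ i ∈ Finset.range j, ((k:ℚ) - (i:ℚ))) * ((k:ℚ) - (j:ℚ)) :=
    Finset.prod_range_succ _ j
  unfold zbinom
  rw [h1, h2, Nat.factorial_succ]
  have hj1 : ((j+1 : ℕ) : ℚ) ≠ 0 := by positivity
  field_simp
  push_cast
  ring

lemma zbinom_natCast (n j : ℕ) : zbinom (n : ℤ) j = (n.choose j : ℚ) := by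
  induction n generalizing j with
  | zero =>
    cases j with
    | zero => simp [zbinom_zero]
    | succ j => simp [zbinom_zero_succ]
  | succ n ih =>
    cases j with
    | zero => simp [zbinom_zero]
    | succ j =>
      have : ((n+1 : ℕ) : ℤ) = (n : ℤ) + 1 := by push_cast; ring
      rw [this, zbinom_pascal, ih, ih, Nat.choose_succ_succ]
      push_cast; ring

lemma zbinom_eq_zero {k : ℤ} {j : ℕ} (hk : 0 ≤ k) (h : k < (j:ℤ)) : zbinom k j = 0 := by
  lift k to ℕ using hk
  rw [zbinom_natCast]
  have : k < j := by exact_mod_cast h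
  simp [Nat.choose_eq_zero_of_lt this]

lemma zbinom_mul_choose (k : ℤ) (a b : ℕ) :
    zbinom k (a+b) * ((a+b).choose a : ℚ) = zbinom k a * zbinom (k - a) b := by
  have hc : ((a+b).choose a : ℚ) * (Nat.factorial a : ℚ) * (Nat.factorial b : ℚ)
      = (Nat.factorial (a+b) : ℚ) := by
    have := Nat.choose_mul_factorial_mul_factorial (Nat.le_add_right a b)
    have h2 : a + b - a = b := by omega
    rw [h2] at this
    exact_mod_cast this
  have hsplit : ∏ i ∈ Finset.range (a+b), ((k:ℚ) - (i:ℚ))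
      = (∏ i ∈ Finset.range a, ((k:ℚ) - (i:ℚ)))
        * ∏ i ∈ Finset.range b, (((k - a : ℤ):ℚ) - (i:ℚ)) := by
    rw [Finset.prod_range_add (fun i => ((k:ℚ) - (i:ℚ))) a b]
    congr 1
    refine Finset.prod_congr rfl fun i _ => ?_
    push_cast; ring
  have ha : ((Nat.factorial a : ℚ)) ≠ 0 := by exact_mod_cast Nat.factorial_ne_zero a
  have hb : ((Nat.factorial b : ℚ)) ≠ 0 := by exact_mod_cast Nat.factorial_ne_zero b
  have hab : ((Nat.factorial (a+b) : ℚ)) ≠ 0 := by exact_mod_cast Nat.factorial_ne_zero (a+b)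
  unfold zbinom
  rw [hsplit]
  field_simp
  rw [← hc]
  ring

end PDO

namespace PDO
open Finset

/-- auxiliary Vandermonde sum -/
noncomputable def vf (x y : ℤ) (c : ℕ) : ℚ :=
  ∑ b ∈ Finset.range (c+1), zbinom x b * zbinom y (c-b)

lemma vf_zero_left (y : ℤ) (c : ℕ) : vf 0 y c = zbinom y c := by
  unfold vf
  rw [Finset.sum_range_succ']
  simp [zbinom_zero_succ, zbinom_zero]

lemma vf_pascal (x y : ℤ) (c : ℕ) : vf (x+1) y (c+1) = vf x y (c+1) + vf x y c := by
  unfold vf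
  rw [Finset.sum_range_succ' (fun b => zbinom (x+1) b * zbinom y (c+1-b)) (c+1),
      Finset.sum_range_succ' (fun b => zbinom x b * zbinom y (c+1-b)) (c+1)]
  simp only [zbinom_pascal, Nat.succ_sub_succ_eq_sub, zbinom_zero, one_mul, add_mul,
    Nat.sub_zero]
  rw [Finset.sum_add_distrib]
  ring

lemma zbinom_vandermonde (x y : ℤ) (c : ℕ) : vf x y c = zbinom (x+y) c := by
  induction c generalizing x y with
  | zero => simp [vf, zbinom_zero]
  | succ c ih =>
    have hstep : ∀ z : ℤ, vf (z+1) y (c+1) - zbinom (z+1+y) (c+1)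
        = vf z y (c+1) - zbinom (z+y) (c+1) := by
      intro z
      have h2 : zbinom (z+1+y) (c+1) = zbinom (z+y) (c+1) + zbinom (z+y) c := by
        rw [show z+1+y = (z+y)+1 by ring, zbinom_pascal]
      rw [vf_pascal, h2, ih]
      ring
    have base : vf 0 y (c+1) - zbinom (0+y) (c+1) = 0 := by
      rw [vf_zero_left, zero_add, sub_self]
    have hconst : ∀ z : ℤ, vf z y (c+1) - zbinom (z+y) (c+1) = 0 := by
      intro z
      induction z using Int.induction_on with
      | zero => exact base
      | succ n ihn =>
        have h := hstep (n : ℤ)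
        rw [h]; exact ihn
      | pred n ihn =>
        have h := hstep (-(n:ℤ)-1)
        rw [show (-(n:ℤ)-1)+1 = -(n:ℤ) by ring] at h
        have : vf (-(n:ℤ)-1) y (c+1) - zbinom (-(n:ℤ)-1+y) (c+1)
            = vf (-(n:ℤ)) y (c+1) - zbinom (-(n:ℤ)+y) (c+1) := by linarith
        rw [this]; exact ihn
    have := hconst x
    linarith

/-- key combinatorial identity -/
lemma zbinom_key (k l : ℤ) (a e : ℕ) :
    ∑ b ∈ Finset.range (e+1), zbinom k (a+b) * ((a+b).choose a : ℚ) * zbinom l (e-b)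
      = zbinom k a * zbinom (k + l - a) e := by
  have h1 : ∀ b ∈ Finset.range (e+1),
      zbinom k (a+b) * ((a+b).choose a : ℚ) * zbinom l (e-b)
        = zbinom k a * (zbinom (k - a) b * zbinom l (e-b)) := by
    intro b _
    rw [zbinom_mul_choose]; ring
  rw [Finset.sum_congr rfl h1, ← Finset.mul_sum]
  have := zbinom_vandermonde (k - a) l e
  unfold vf at this
  rw [this, show k - a + l = k + l - a by ring]

end PDO

namespace PDO
open Finset

section DerivIter
variable {A : Type*} [CommRing A] [Algebra ℚ A] (d : Derivation ℚ A A)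

lemma iter_zero (n : ℕ) : (⇑d)^[n] (0 : A) = 0 := by
  induction n with
  | zero => rfl
  | succ n ih => rw [Function.iterate_succ_apply', ih, map_zero]

lemma iter_add (n : ℕ) (x y : A) : (⇑d)^[n] (x+y) = (⇑d)^[n] x + (⇑d)^[n] y := by
  induction n with
  | zero => rfl
  | succ n ih =>
    rw [Function.iterate_succ_apply', Function.iterate_succ_apply',
      Function.iterate_succ_apply', ih, map_add]

lemma iter_smul (n : ℕ) (q : ℚ) (x : A) : (⇑d)^[n] (q • x) = q • (⇑d)^[n] x := by
  induction n with
  | zero => rfl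
  | succ n ih =>
    rw [Function.iterate_succ_apply', Function.iterate_succ_apply', ih, d.map_smul]

lemma iter_sum {ι : Type*} (n : ℕ) (s : Finset ι) (f : ι → A) :
    (⇑d)^[n] (∑ i ∈ s, f i) = ∑ i ∈ s, (⇑d)^[n] (f i) := by
  classical
  induction s using Finset.induction_on with
  | empty => simp [iter_zero]
  | @insert a s h ih => rw [Finset.sum_insert h, Finset.sum_insert h, iter_add, ih]

lemma iter_leibniz (n : ℕ) (x y : A) :
    (⇑d)^[n] (x * y)
      = ∑ i ∈ Finset.range (n+1), (n.choose i : ℚ) • ((⇑d)^[i] x * (⇑d)^[n-i] y) := by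
  induction n with
  | zero => simp
  | succ n ih =>
    rw [Function.iterate_succ_apply', ih, map_sum]
    have hterm : ∀ i ∈ Finset.range (n+1),
        d ((n.choose i : ℚ) • ((⇑d)^[i] x * (⇑d)^[n-i] y))
          = (n.choose i : ℚ) • ((⇑d)^[i] x * (⇑d)^[n+1-i] y)
            + (n.choose i : ℚ) • ((⇑d)^[i+1] x * (⇑d)^[n-i] y) := by
      intro i hi
      have hik : i ≤ n := Nat.lt_succ_iff.1 (Finset.mem_range.1 hi)
      have hs : n + 1 - i = (n - i) + 1 := by omega
      rw [d.map_smul, Derivation.leibniz, smul_eq_mul, smul_eq_mul, hs,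
        Function.iterate_succ_apply' d (n-i) y, Function.iterate_succ_apply' d i x,
        smul_add]
      congr 1
      rw [mul_comm]
    rw [Finset.sum_congr rfl hterm, Finset.sum_add_distrib]
    -- goal:  ∑ C(n,i)•(d^i x * d^{n+1-i} y) + ∑ C(n,i)•(d^{i+1} x * d^{n-i} y)
    --      = ∑_{i<n+2} C(n+1,i)•(d^i x * d^{n+1-i} y)
    rw [Finset.sum_range_succ' (fun i => ((n+1).choose i : ℚ) • ((⇑d)^[i] x * (⇑d)^[n+1-i] y)) (n+1)]
    have h2 : ∀ i ∈ Finset.range (n+1),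
        (((n+1).choose (i+1) : ℚ)) • ((⇑d)^[i+1] x * (⇑d)^[n+1-(i+1)] y)
          = ((n.choose i : ℚ)) • ((⇑d)^[i+1] x * (⇑d)^[n-i] y)
            + ((n.choose (i+1) : ℚ)) • ((⇑d)^[i+1] x * (⇑d)^[n-i] y) := by
      intro i hi
      have : (n+1).choose (i+1) = n.choose i + n.choose (i+1) := Nat.choose_succ_succ n i
      rw [this, Nat.succ_sub_succ_eq_sub]
      push_cast
      rw [add_smul]
    rw [Finset.sum_congr rfl h2, Finset.sum_add_distrib]
    -- second piece: ∑_{i<n+1} C(n,i+1) • (d^{i+1} x * d^{n-i} y) = ∑_{i<n+1} C(n,i) • (d^i x * d^{n+1-i} y) - 1•(x*d^{n+1}y)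
    have h3 : ∑ i ∈ Finset.range (n+1), ((n.choose (i+1) : ℚ)) • ((⇑d)^[i+1] x * (⇑d)^[n-i] y)
        = ∑ i ∈ Finset.range (n+1), ((n.choose i : ℚ)) • ((⇑d)^[i] x * (⇑d)^[n+1-i] y)
          - (x * (⇑d)^[n+1] y) := by
      have h4 := Finset.sum_range_succ' (fun i => ((n.choose i : ℚ)) • ((⇑d)^[i] x * (⇑d)^[n+1-i] y)) (n+1)
      have h5 : ∑ i ∈ Finset.range (n+2), ((n.choose i : ℚ)) • ((⇑d)^[i] x * (⇑d)^[n+1-i] y)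
          = ∑ i ∈ Finset.range (n+1), ((n.choose i : ℚ)) • ((⇑d)^[i] x * (⇑d)^[n+1-i] y) := by
        rw [Finset.sum_range_succ]
        simp [Nat.choose_succ_self]
      have h6 : ∀ i ∈ Finset.range (n+1),
          ((n.choose (i+1) : ℚ)) • ((⇑d)^[i+1] x * (⇑d)^[n+1-(i+1)] y)
            = ((n.choose (i+1) : ℚ)) • ((⇑d)^[i+1] x * (⇑d)^[n-i] y) := by
        intro i hi
        rw [Nat.succ_sub_succ_eq_sub]
      rw [h5, Finset.sum_congr rfl h6] at h4
      simp only [Nat.choose_zero_right, Nat.cast_one, one_smul, Function.iterate_zero_apply,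
        Nat.sub_zero] at h4
      rw [h4]; ring
    rw [h3]
    simp only [Nat.choose_zero_right, Nat.cast_one, one_smul, Function.iterate_zero_apply,
      Nat.sub_zero]
    abel

end DerivIter
end PDO

namespace PDO
open Finset

section MulLemmas
variable {A : Type*} [CommRing A] [Algebra ℚ A] (d : Derivation ℚ A A)

lemma mul_eq_sum (P Q : PDO A) {N₁ N₂ : ℤ}
    (hP : ∀ m : ℤ, N₁ < m → P m = 0) (hQ : ∀ m : ℤ, N₂ < m → Q m = 0)
    (m : ℤ) (s : Finset ℤ) (hs : Finset.Icc (m - N₂) N₁ ⊆ s)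
    (J : ℕ) (hJ : N₁ + N₂ - m < (J : ℤ)) :
    mul (⇑d) P Q m
      = ∑ k ∈ s, ∑ j ∈ Finset.range J, zbinom k j • (P k * (⇑d)^[j] (Q (m + j - k))) := by
  have hterm : ∀ k : ℤ, ∀ j : ℕ, zbinom k j • (P k * (⇑d)^[j] (Q (m + j - k))) ≠ 0 →
      P k ≠ 0 ∧ Q (m + j - k) ≠ 0 := by
    intro k j h
    refine ⟨fun h0 => h (by rw [h0, zero_mul, smul_zero]),
      fun h0 => h (by rw [h0, iter_zero, mul_zero, smul_zero])⟩
  have hinner : ∀ k : ℤ, (∑ᶠ (l : ℤ), if 0 ≤ k + l - m then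
        zbinom k (k + l - m).toNat • (P k * (⇑d)^[(k + l - m).toNat] (Q l)) else 0)
      = ∑ j ∈ Finset.range J, zbinom k j • (P k * (⇑d)^[j] (Q (m + j - k))) := by
    intro k
    rw [finsum_eq_sum_of_support_subset _
      (s := (Finset.range J).image (fun j : ℕ => m + (j:ℤ) - k)) ?supp]
    · rw [Finset.sum_image (fun a _ b _ h => by omega)]
      refine Finset.sum_congr rfl fun j _ => ?_
      have h1 : 0 ≤ k + (m + (j:ℤ) - k) - m := by omega
      rw [if_pos h1]
      have h2 : (k + (m + (j:ℤ) - k) - m).toNat = j := by omega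
      rw [h2]
    case supp =>
      intro l hl
      simp only [Function.mem_support] at hl
      by_cases hc : 0 ≤ k + l - m
      · rw [if_pos hc] at hl
        have hPk : P k ≠ 0 := fun h0 => hl (by rw [h0, zero_mul, smul_zero])
        have hQl : Q l ≠ 0 := fun h0 => hl (by rw [h0, iter_zero, mul_zero, smul_zero])
        have hk : k ≤ N₁ := not_lt.1 fun hh => hPk (hP k hh)
        have hlN : l ≤ N₂ := not_lt.1 fun hh => hQl (hQ l hh)
        refine Finset.mem_coe.2 (Finset.mem_image.2 ⟨(k+l-m).toNat, Finset.mem_range.2 ?_, ?_⟩)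
        · omega
        · omega
      · rw [if_neg hc] at hl; exact absurd rfl hl
  show (∑ᶠ (k : ℤ) (l : ℤ), if 0 ≤ k + l - m then
      zbinom k (k + l - m).toNat • (P k * (⇑d)^[(k + l - m).toNat] (Q l)) else 0) = _
  rw [finsum_congr hinner]
  refine finsum_eq_sum_of_support_subset _ ?_
  intro k hk
  simp only [Function.mem_support] at hk
  obtain ⟨j, hjmem, hjne⟩ := Finset.exists_ne_zero_of_sum_ne_zero hk
  obtain ⟨hPk, hQl⟩ := hterm k j hjne
  have hk1 : k ≤ N₁ := not_lt.1 fun hh => hPk (hP k hh)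
  have hk2 : m + (j:ℤ) - k ≤ N₂ := not_lt.1 fun hh => hQl (hQ _ hh)
  exact hs (Finset.mem_Icc.2 ⟨by omega, hk1⟩)

lemma mul_ub (P Q : PDO A) {N₁ N₂ : ℤ}
    (hP : ∀ m : ℤ, N₁ < m → P m = 0) (hQ : ∀ m : ℤ, N₂ < m → Q m = 0) :
    ∀ m : ℤ, N₁ + N₂ < m → mul (⇑d) P Q m = 0 := by
  intro m hm
  rw [mul_eq_sum d P Q hP hQ m (Finset.Icc (m - N₂) N₁) (le_refl _)
    ((N₁ + N₂ - m).toNat + 1) (by omega)]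
  rw [Finset.Icc_eq_empty (by omega), Finset.sum_empty]

end MulLemmas
end PDO

namespace PDO
open Finset

section MulLemmas2
variable {A : Type*} [CommRing A] [Algebra ℚ A] (d : Derivation ℚ A A)

lemma one_ub : ∀ m : ℤ, 0 < m → (one : PDO A) m = 0 := fun m hm => by
  rw [one, if_neg (by omega)]

lemma mul_add_right (P Q R : PDO A) {N₁ N₂ : ℤ}
    (hP : ∀ m : ℤ, N₁ < m → P m = 0) (hQ : ∀ m : ℤ, N₂ < m → Q m = 0)
    (hR : ∀ m : ℤ, N₂ < m → R m = 0) :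
    mul (⇑d) P (Q + R) = fun m => mul (⇑d) P Q m + mul (⇑d) P R m := by
  funext m
  have hQR : ∀ m : ℤ, N₂ < m → (Q + R) m = 0 := fun m hm => by
    simp [Pi.add_apply, hQ m hm, hR m hm]
  have hJ : N₁ + N₂ - m < (((N₁ + N₂ - m).toNat + 1 : ℕ) : ℤ) := by omega
  rw [mul_eq_sum d P (Q+R) hP hQR m (Finset.Icc (m - N₂) N₁) (le_refl _) _ hJ,
      mul_eq_sum d P Q hP hQ m (Finset.Icc (m - N₂) N₁) (le_refl _) _ hJ,
      mul_eq_sum d P R hP hR m (Finset.Icc (m - N₂) N₁) (le_refl _) _ hJ,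
      ← Finset.sum_add_distrib]
  refine Finset.sum_congr rfl fun k _ => ?_
  rw [← Finset.sum_add_distrib]
  refine Finset.sum_congr rfl fun j _ => ?_
  rw [Pi.add_apply, iter_add, mul_add, smul_add]

lemma mul_add_left (P Q R : PDO A) {N₁ N₂ : ℤ}
    (hP : ∀ m : ℤ, N₁ < m → P m = 0) (hQ : ∀ m : ℤ, N₂ < m → Q m = 0)
    (hR : ∀ m : ℤ, N₂ < m → R m = 0) :
    mul (⇑d) (Q + R) P = fun m => mul (⇑d) Q P m + mul (⇑d) R P m := by
  funext m
  have hQR : ∀ m : ℤ, N₂ < m → (Q + R) m = 0 := fun m hm => by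
    simp [Pi.add_apply, hQ m hm, hR m hm]
  have hJ : N₂ + N₁ - m < (((N₂ + N₁ - m).toNat + 1 : ℕ) : ℤ) := by omega
  rw [mul_eq_sum d (Q+R) P hQR hP m (Finset.Icc (m - N₁) N₂) (le_refl _) _ hJ,
      mul_eq_sum d Q P hQ hP m (Finset.Icc (m - N₁) N₂) (le_refl _) _ hJ,
      mul_eq_sum d R P hR hP m (Finset.Icc (m - N₁) N₂) (le_refl _) _ hJ,
      ← Finset.sum_add_distrib]
  refine Finset.sum_congr rfl fun k _ => ?_
  rw [← Finset.sum_add_distrib]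
  refine Finset.sum_congr rfl fun j _ => ?_
  rw [Pi.add_apply, add_mul, smul_add]

lemma one_mul' (Q : PDO A) {N₂ : ℤ} (hQ : ∀ m : ℤ, N₂ < m → Q m = 0) :
    mul (⇑d) one Q = Q := by
  funext m
  by_cases hm : m ≤ N₂
  · rw [mul_eq_sum d one Q one_ub hQ m (Finset.Icc (m - N₂) 0) (le_refl _)
      ((N₂ - m).toNat + 1) (by omega)]
    rw [Finset.sum_eq_single_of_mem 0 (Finset.mem_Icc.2 ⟨by omega, le_refl 0⟩)]
    · rw [Finset.sum_eq_single_of_mem 0 (Finset.mem_range.2 (by omega))]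
      · simp [one, zbinom_zero]
      · intro j _ hj
        obtain ⟨j', rfl⟩ : ∃ j', j = j' + 1 := ⟨j - 1, by omega⟩
        rw [zbinom_zero_succ, zero_smul]
    · intro k _ hk
      refine Finset.sum_eq_zero fun j _ => ?_
      rw [show (one : PDO A) k = 0 by rw [one, if_neg hk], zero_mul, smul_zero]
  · rw [hQ m (by omega), mul_ub d one Q one_ub hQ m (by omega)]

lemma pow_ub (P : PDO A) (hP : ∀ m : ℤ, 1 < m → P m = 0) :
    ∀ n : ℕ, ∀ m : ℤ, (n : ℤ) < m → pow (⇑d) P n m = 0 := by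
  intro n
  induction n with
  | zero =>
    intro m hm
    exact one_ub m (by exact_mod_cast hm)
  | succ n ih =>
    intro m hm
    have := mul_ub d P (pow (⇑d) P n) hP ih m (by push_cast at hm ⊢; omega)
    simpa [pow] using this

end MulLemmas2
end PDO

namespace PDO
open Finset

section Helpers
variable {M : Type*} [AddCommMonoid M]

lemma sum_congr_of_support {α : Type*} (F : α → M) (s t : Finset α)
    (hs : ∀ x, F x ≠ 0 → x ∈ s) (ht : ∀ x, F x ≠ 0 → x ∈ t) :
    ∑ x ∈ s, F x = ∑ x ∈ t, F x := by
  classical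
  have h1 : ∑ x ∈ s ∩ t, F x = ∑ x ∈ s, F x :=
    Finset.sum_subset Finset.inter_subset_left (fun x hx hnx => by
      by_contra h; exact hnx (Finset.mem_inter.2 ⟨hx, ht x h⟩))
  have h2 : ∑ x ∈ s ∩ t, F x = ∑ x ∈ t, F x :=
    Finset.sum_subset Finset.inter_subset_right (fun x hx hnx => by
      by_contra h; exact hnx (Finset.mem_inter.2 ⟨hs x h, hx⟩))
  rw [← h1, h2]

lemma triangle_sum' (h : ℕ → ℕ → M) :
    ∀ J : ℕ, ∑ n ∈ Finset.range J, ∑ i ∈ Finset.range (n+1), h i (n-i)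
      = ∑ a ∈ Finset.range J, ∑ c ∈ Finset.range (J-a), h a c := by
  intro J
  induction J with
  | zero => simp
  | succ J ih =>
    rw [Finset.sum_range_succ _ J, ih]
    have h1 : ∑ a ∈ Finset.range (J+1), ∑ c ∈ Finset.range (J+1-a), h a c
        = ∑ a ∈ Finset.range (J+1), (∑ c ∈ Finset.range (J-a), h a c + h a (J-a)) := by
      refine Finset.sum_congr rfl fun a ha => ?_
      have ha' : a < J + 1 := Finset.mem_range.1 ha
      have : J+1-a = (J-a)+1 := by omega
      rw [this, Finset.sum_range_succ]
    rw [h1, Finset.sum_add_distrib,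
      Finset.sum_range_succ (fun a => ∑ c ∈ Finset.range (J-a), h a c) J]
    simp only [Nat.sub_self, Finset.range_zero, Finset.sum_empty, add_zero]

lemma triangle_sum (J : ℕ) (h : ℕ → ℕ → M)
    (hv : ∀ a c, J ≤ a + c → h a c = 0) :
    ∑ n ∈ Finset.range J, ∑ i ∈ Finset.range (n+1), h i (n-i)
      = ∑ a ∈ Finset.range J, ∑ c ∈ Finset.range J, h a c := by
  rw [triangle_sum' h J]
  refine Finset.sum_congr rfl fun a ha => ?_
  have ha' : a < J := Finset.mem_range.1 ha
  refine Finset.sum_subset (Finset.range_subset_range.2 (by omega)) fun c _ hc => ?_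
  exact hv a c (by have := Finset.mem_range.not.1 hc; omega)

lemma sum_comm3 {α β γ : Type*} (s : Finset α) (t : Finset β) (u : Finset γ)
    (f : α → β → γ → M) :
    ∑ a ∈ s, ∑ b ∈ t, ∑ c ∈ u, f a b c = ∑ c ∈ u, ∑ a ∈ s, ∑ b ∈ t, f a b c := by
  refine (Finset.sum_congr rfl fun a _ => Finset.sum_comm).trans ?_
  exact Finset.sum_comm

lemma sum_comm4 {α β γ δ : Type*} (s : Finset α) (t : Finset β) (u : Finset γ) (v : Finset δ)
    (f : α → β → γ → δ → M) :
    ∑ a ∈ s, ∑ b ∈ t, ∑ c ∈ u, ∑ e ∈ v, f a b c e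
      = ∑ c ∈ u, ∑ e ∈ v, ∑ b ∈ t, ∑ a ∈ s, f a b c e := by
  refine (Finset.sum_congr rfl fun a _ => Finset.sum_comm).trans ?_
  refine Finset.sum_comm.trans ?_
  refine Finset.sum_congr rfl fun c _ => ?_
  refine Finset.sum_comm.trans ?_
  refine (Finset.sum_congr rfl fun e _ => Finset.sum_comm).trans ?_
  exact Finset.sum_comm

end Helpers
end PDO

namespace PDO
open Finset

section Assoc
variable {A : Type*} [CommRing A] [Algebra ℚ A] (d : Derivation ℚ A A)

lemma mul_assoc' (P Q R : PDO A) {N₁ N₂ N₃ : ℤ}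
    (hP : ∀ m : ℤ, N₁ < m → P m = 0) (hQ : ∀ m : ℤ, N₂ < m → Q m = 0)
    (hR : ∀ m : ℤ, N₃ < m → R m = 0) :
    mul (⇑d) P (mul (⇑d) Q R) = mul (⇑d) (mul (⇑d) P Q) R := by
  funext m
  set H : ℤ := (N₁.natAbs : ℤ) + (N₂.natAbs : ℤ) + (N₃.natAbs : ℤ) with hH
  set J : ℕ := (20 * H + (m.natAbs : ℤ) + 20).toNat with hJdef
  set Bc : Finset ℤ := Finset.Icc (m - 8*H - 8) (8*H + 8) with hBc
  set B2 : Finset ℤ := Finset.Icc (m - 2*H - 2) (2*H + 2) with hB2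
  have hQR : ∀ x : ℤ, N₂ + N₃ < x → mul (⇑d) Q R x = 0 := mul_ub d Q R hQ hR
  have hPQ : ∀ x : ℤ, N₁ + N₂ < x → mul (⇑d) P Q x = 0 := mul_ub d P Q hP hQ
  have hterm3 : ∀ (k l t : ℤ) (a e : ℕ) (q : ℚ),
      q • (P k * ((⇑d)^[a] (Q l) * (⇑d)^[e] (R t))) ≠ 0 →
      P k ≠ 0 ∧ Q l ≠ 0 ∧ R t ≠ 0 := by
    intro k l t a e q h
    refine ⟨fun h0 => h (by rw [h0, zero_mul, smul_zero]),
      fun h0 => h (by rw [h0, iter_zero, zero_mul, mul_zero, smul_zero]),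
      fun h0 => h (by rw [h0, iter_zero, mul_zero, mul_zero, smul_zero])⟩
  trans (∑ k ∈ Bc, ∑ l ∈ Bc, ∑ i ∈ Finset.range J, ∑ n ∈ Finset.range J,
      (zbinom k i * zbinom (k + l - (i:ℤ)) n) •
        (P k * ((⇑d)^[i] (Q l) * (⇑d)^[n] (R (m + (i:ℤ) + (n:ℤ) - k - l)))))
  · -- LHS = CANON
    rw [mul_eq_sum d P (mul (⇑d) Q R) hP hQR m Bc
      (Finset.Icc_subset_Icc (by omega) (by omega)) J (by omega)]
    have hstep2 : ∀ k ∈ Bc, ∀ a ∈ Finset.range J,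
        zbinom k a • (P k * (⇑d)^[a] (mul (⇑d) Q R (m + (a:ℤ) - k)))
          = ∑ l ∈ Bc, ∑ b ∈ Finset.range J, ∑ i ∈ Finset.range (a+1),
              (zbinom k a * (zbinom l b * ((a.choose i : ℚ)))) •
                (P k * ((⇑d)^[i] (Q l) * (⇑d)^[a-i+b] (R ((m + (a:ℤ) - k) + (b:ℤ) - l)))) := by
      intro k hk a _
      by_cases hPk : P k = 0
      · rw [hPk]
        rw [zero_mul, smul_zero]
        refine (Finset.sum_eq_zero fun l _ => Finset.sum_eq_zero fun b _ =>
          Finset.sum_eq_zero fun i _ => ?_).symm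
        rw [zero_mul, smul_zero]
      · have hkN : k ≤ N₁ := not_lt.1 fun hh => hPk (hP k hh)
        have hkmem := Finset.mem_Icc.1 (hBc ▸ hk)
        rw [mul_eq_sum d Q R hQ hR (m + (a:ℤ) - k) Bc
          (Finset.Icc_subset_Icc (by omega) (by omega)) J (by omega)]
        rw [iter_sum]
        rw [Finset.mul_sum, Finset.smul_sum]
        refine Finset.sum_congr rfl fun l _ => ?_
        rw [iter_sum, Finset.mul_sum, Finset.smul_sum]
        refine Finset.sum_congr rfl fun b _ => ?_
        rw [iter_smul, iter_leibniz]
        rw [Finset.smul_sum, Finset.mul_sum, Finset.smul_sum]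
        refine Finset.sum_congr rfl fun i _ => ?_
        rw [← Function.iterate_add_apply]
        rw [smul_smul, mul_smul_comm, smul_smul]
    rw [Finset.sum_congr rfl fun k hk => Finset.sum_congr rfl fun a ha => hstep2 k hk a ha]
    -- reorder : k a l b i -> k l a i b
    rw [Finset.sum_congr rfl fun k _ => (Finset.sum_comm).trans
      (Finset.sum_congr rfl fun l _ => Finset.sum_congr rfl fun a _ => Finset.sum_comm)]
    refine Finset.sum_congr rfl fun k hk => Finset.sum_congr rfl fun l hl => ?_
    have hkmem := Finset.mem_Icc.1 (hBc ▸ hk)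
    have hlmem := Finset.mem_Icc.1 (hBc ▸ hl)
    -- triangle on (a, i)
    have htri1 : ∑ a ∈ Finset.range J, ∑ i ∈ Finset.range (a+1), ∑ b ∈ Finset.range J,
        (zbinom k a * (zbinom l b * ((a.choose i : ℚ)))) •
          (P k * ((⇑d)^[i] (Q l) * (⇑d)^[a-i+b] (R ((m + (a:ℤ) - k) + (b:ℤ) - l))))
        = ∑ i ∈ Finset.range J, ∑ c ∈ Finset.range J, ∑ b ∈ Finset.range J,
            (zbinom k (i+c) * (zbinom l b * (((i+c).choose i : ℚ)))) •
              (P k * ((⇑d)^[i] (Q l) * (⇑d)^[c+b] (R ((m + ((i+c:ℕ):ℤ) - k) + (b:ℤ) - l)))) := by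
      rw [← triangle_sum J (fun i c => ∑ b ∈ Finset.range J,
        (zbinom k (i+c) * (zbinom l b * (((i+c).choose i : ℚ)))) •
          (P k * ((⇑d)^[i] (Q l) * (⇑d)^[c+b] (R ((m + ((i+c:ℕ):ℤ) - k) + (b:ℤ) - l)))))
        (fun a c hac => Finset.sum_eq_zero fun b _ => by
          rw [hR ((m + ((a+c:ℕ):ℤ) - k) + (b:ℤ) - l) (by push_cast; omega),
            iter_zero, mul_zero, mul_zero, smul_zero])]
      refine Finset.sum_congr rfl fun a ha => Finset.sum_congr rfl fun i hi => ?_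
      have hia : i ≤ a := Nat.lt_succ_iff.1 (Finset.mem_range.1 hi)
      rw [Nat.add_sub_cancel' hia]
    rw [htri1]
    refine Finset.sum_congr rfl fun i _ => ?_
    -- reverse triangle on (c, b)
    rw [← triangle_sum J (fun c b =>
        (zbinom k (i+c) * (zbinom l b * (((i+c).choose i : ℚ)))) •
          (P k * ((⇑d)^[i] (Q l) * (⇑d)^[c+b] (R ((m + ((i+c:ℕ):ℤ) - k) + (b:ℤ) - l)))))
      (fun c b hcb => by
        rw [hR ((m + ((i+c:ℕ):ℤ) - k) + (b:ℤ) - l) (by push_cast; omega),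
          iter_zero, mul_zero, mul_zero, smul_zero])]
    refine Finset.sum_congr rfl fun n _ => ?_
    have hcol : ∀ c ∈ Finset.range (n+1),
        (zbinom k (i+c) * (zbinom l (n-c) * (((i+c).choose i : ℚ)))) •
          (P k * ((⇑d)^[i] (Q l) * (⇑d)^[c+(n-c)] (R ((m + ((i+c:ℕ):ℤ) - k) + ((n-c:ℕ):ℤ) - l))))
        = (zbinom k (i+c) * (((i+c).choose i : ℚ)) * zbinom l (n-c)) •
          (P k * ((⇑d)^[i] (Q l) * (⇑d)^[n] (R (m + (i:ℤ) + (n:ℤ) - k - l)))) := by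
      intro c hc
      have hcn : c ≤ n := Nat.lt_succ_iff.1 (Finset.mem_range.1 hc)
      rw [Nat.add_sub_cancel' hcn,
        show (m + ((i+c:ℕ):ℤ) - k) + ((n-c:ℕ):ℤ) - l = m + (i:ℤ) + (n:ℤ) - k - l by
          push_cast [hcn]; omega]
      ring_nf
    rw [Finset.sum_congr rfl hcol, ← Finset.sum_smul, zbinom_key]
  · -- RHS = CANON  (proved in reverse direction)
    symm
    rw [mul_eq_sum d (mul (⇑d) P Q) R hPQ hR m B2
      (Finset.Icc_subset_Icc (by omega) (by omega)) J (by omega)]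
    have hstep2 : ∀ k' ∈ B2, ∀ e ∈ Finset.range J,
        zbinom k' e • (mul (⇑d) P Q k' * (⇑d)^[e] (R (m + (e:ℤ) - k')))
          = ∑ k ∈ Bc, ∑ a ∈ Finset.range J,
              (zbinom k' e * zbinom k a) •
                (P k * ((⇑d)^[a] (Q (k' + (a:ℤ) - k)) * (⇑d)^[e] (R (m + (e:ℤ) - k')))) := by
      intro k' hk' e _
      have hk'mem := Finset.mem_Icc.1 (hB2 ▸ hk')
      rw [mul_eq_sum d P Q hP hQ k' Bc
        (Finset.Icc_subset_Icc (by omega) (by omega)) J (by omega)]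
      rw [Finset.sum_mul, Finset.smul_sum]
      refine Finset.sum_congr rfl fun k _ => ?_
      rw [Finset.sum_mul, Finset.smul_sum]
      refine Finset.sum_congr rfl fun a _ => ?_
      rw [smul_mul_assoc, mul_assoc, smul_smul]
    rw [Finset.sum_congr rfl fun k' hk' => Finset.sum_congr rfl fun e he => hstep2 k' hk' e he]
    rw [sum_comm4 B2 (Finset.range J) Bc (Finset.range J)]
    refine Finset.sum_congr rfl fun k hk => ?_
    have hkmem := Finset.mem_Icc.1 (hBc ▸ hk)
    rw [← sum_comm3 (Finset.range J) (Finset.range J) Bc]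
    refine Finset.sum_congr rfl fun a _ => Finset.sum_congr rfl fun e _ => ?_
    -- reindex k' = l + (k - a)
    have hre0 : ∀ k' ∈ B2,
        (zbinom k' e * zbinom k a) •
          (P k * ((⇑d)^[a] (Q (k' + (a:ℤ) - k)) * (⇑d)^[e] (R (m + (e:ℤ) - k'))))
        = (fun l : ℤ => (zbinom (l + (k - (a:ℤ))) e * zbinom k a) •
            (P k * ((⇑d)^[a] (Q ((l + (k - (a:ℤ))) + (a:ℤ) - k))
              * (⇑d)^[e] (R (m + (e:ℤ) - (l + (k - (a:ℤ)))))))) (k' + ((a:ℤ) - k)) := by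
      intro k' _
      simp only
      rw [show k' + ((a:ℤ) - k) + (k - (a:ℤ)) = k' by ring]
    rw [Finset.sum_congr rfl hre0]
    have hmap := Finset.sum_map B2 (addRightEmbedding ((a:ℤ) - k))
      (fun l : ℤ => (zbinom (l + (k - (a:ℤ))) e * zbinom k a) •
            (P k * ((⇑d)^[a] (Q ((l + (k - (a:ℤ))) + (a:ℤ) - k))
              * (⇑d)^[e] (R (m + (e:ℤ) - (l + (k - (a:ℤ))))))))
    simp only [addRightEmbedding_apply] at hmap
    rw [← hmap]
    rw [sum_congr_of_support _ (B2.map (addRightEmbedding ((a:ℤ) - k))) Bc ?h1 ?h2]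
    case h1 =>
      intro l hne
      obtain ⟨hPk, hQl, hRl⟩ := hterm3 _ _ _ _ _ _ hne
      have hb1 : k ≤ N₁ := not_lt.1 fun hh => hPk (hP _ hh)
      have hb2 : (l + (k - (a:ℤ))) + (a:ℤ) - k ≤ N₂ := not_lt.1 fun hh => hQl (hQ _ hh)
      have hb3 : m + (e:ℤ) - (l + (k - (a:ℤ))) ≤ N₃ := not_lt.1 fun hh => hRl (hR _ hh)
      refine Finset.mem_map.2 ⟨l - ((a:ℤ) - k), ?_, ?_⟩
      · rw [hB2, Finset.mem_Icc]
        constructor <;> omega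
      · simp [addRightEmbedding]
    case h2 =>
      intro l hne
      obtain ⟨hPk, hQl, hRl⟩ := hterm3 _ _ _ _ _ _ hne
      have hb1 : k ≤ N₁ := not_lt.1 fun hh => hPk (hP _ hh)
      have hb2 : (l + (k - (a:ℤ))) + (a:ℤ) - k ≤ N₂ := not_lt.1 fun hh => hQl (hQ _ hh)
      have hb3 : m + (e:ℤ) - (l + (k - (a:ℤ))) ≤ N₃ := not_lt.1 fun hh => hRl (hR _ hh)
      rw [hBc, Finset.mem_Icc]
      constructor <;> omega
    refine Finset.sum_congr rfl fun l _ => ?_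
    rw [show l + (k - (a:ℤ)) = k + l - (a:ℤ) by ring,
      show k + l - (a:ℤ) + (a:ℤ) - k = l by ring,
      show m + (e:ℤ) - (k + l - (a:ℤ)) = m + (a:ℤ) + (e:ℤ) - k - l by ring,
      mul_comm (zbinom (k + l - (a:ℤ)) e) (zbinom k a)]

end Assoc
end PDO

namespace PDO
open Finset

section Final
variable {A : Type*} [CommRing A] [Algebra ℚ A] (d : Derivation ℚ A A)

lemma pow_add' (P : PDO A) (hP : ∀ m : ℤ, 1 < m → P m = 0) (a b : ℕ) :
    pow (⇑d) P (a + b) = mul (⇑d) (pow (⇑d) P a) (pow (⇑d) P b) := by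
  induction a with
  | zero =>
    rw [Nat.zero_add]
    exact (one_mul' d (pow (⇑d) P b) (pow_ub d P hP b)).symm
  | succ a ih =>
    rw [show a + 1 + b = (a + b) + 1 by omega]
    show mul (⇑d) P (pow (⇑d) P (a + b)) = _
    rw [ih, mul_assoc' d P (pow (⇑d) P a) (pow (⇑d) P b) hP (pow_ub d P hP a) (pow_ub d P hP b)]
    rfl

lemma pow_comm' (P : PDO A) (hP : ∀ m : ℤ, 1 < m → P m = 0) (a b : ℕ) :
    mul (⇑d) (pow (⇑d) P a) (pow (⇑d) P b) = mul (⇑d) (pow (⇑d) P b) (pow (⇑d) P a) := by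
  rw [← pow_add' d P hP a b, ← pow_add' d P hP b a, Nat.add_comm]

lemma diff_mul_vanish (X Y : PDO A) {N₁ N₂ : ℤ}
    (hX : ∀ m : ℤ, N₁ < m → X m = 0) (hXpos : ∀ m : ℤ, m < 0 → X m = 0)
    (hY : ∀ m : ℤ, N₂ < m → Y m = 0) (hYpos : ∀ m : ℤ, m < 0 → Y m = 0) :
    ∀ m : ℤ, m < 0 → mul (⇑d) X Y m = 0 := by
  intro m hm
  rw [mul_eq_sum d X Y hX hY m (Finset.Icc (m - N₂) N₁) (le_refl _)
    ((N₁ + N₂ - m).toNat + 1) (by omega)]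
  refine Finset.sum_eq_zero fun kk _ => Finset.sum_eq_zero fun j _ => ?_
  by_cases hXk : X kk = 0
  · rw [hXk, zero_mul, smul_zero]
  by_cases hYl : Y (m + (j:ℤ) - kk) = 0
  · rw [hYl, iter_zero, mul_zero, smul_zero]
  have h1 : 0 ≤ kk := not_lt.1 fun hh => hXk (hXpos kk hh)
  have h2 : 0 ≤ m + (j:ℤ) - kk := not_lt.1 fun hh => hYl (hYpos _ hh)
  rw [zbinom_eq_zero h1 (by omega), zero_smul]

end Final
end PDO


/-- Let `L = D^r − ∑_{m=0}^{r−2} u_m D^m` and `Q = (L^{1/r})^k` for some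
`k ≥ 0`, with decomposition `Q = Q₊ + Q₋` into differential and purely negative parts.
Then `[Q₊, L] = −[Q₋, L]`, and consequently `[Q₊, L]` is a differential operator of order
not exceeding `r − 2` (its coefficients vanish in all degrees `m < 0` and `m > r − 2`). -/
theorem bracket_posPart_eq_neg_bracket_negPart
    {A : Type*} [CommRing A] [Algebra ℚ A] (d : Derivation ℚ A A)
    (r : ℕ) (hr : 2 ≤ r) (u : ℕ → A)
    (P : PDO A) (hP : PDO.IsRoot (⇑d) r u P) (k : ℕ) :
    PDO.bracket (⇑d) (PDO.posPart (PDO.pow (⇑d) P k)) (PDO.lax r u)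
        = - PDO.bracket (⇑d) (PDO.negPart (PDO.pow (⇑d) P k)) (PDO.lax r u) ∧
    (∀ m : ℤ, m < 0 ∨ (r : ℤ) - 2 < m →
      PDO.bracket (⇑d) (PDO.posPart (PDO.pow (⇑d) P k)) (PDO.lax r u) m = 0) := by
  open PDO in
  obtain ⟨⟨hP1, hPsh⟩, hProot⟩ := hP
  have hPub : ∀ m : ℤ, 1 < m → P m = 0 := fun m hm => hPsh m (by omega) (by omega)
  have hQub : ∀ m : ℤ, (k:ℤ) < m → PDO.pow (⇑d) P k m = 0 := PDO.pow_ub d P hPub k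
  have hLub : ∀ m : ℤ, (r:ℤ) < m → PDO.lax r u m = 0 := by
    intro m hm
    rw [PDO.lax, if_neg (by omega), if_neg (by omega)]
  have hLpos : ∀ m : ℤ, m < 0 → PDO.lax r u m = 0 := by
    intro m hm
    rw [PDO.lax, if_neg (by omega), if_neg (by omega)]
  have hpub : ∀ m : ℤ, (k:ℤ) < m → PDO.posPart (PDO.pow (⇑d) P k) m = 0 := by
    intro m hm
    rw [PDO.posPart]
    split
    · exact hQub m hm
    · rfl
  have hppos : ∀ m : ℤ, m < 0 → PDO.posPart (PDO.pow (⇑d) P k) m = 0 := by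
    intro m hm
    rw [PDO.posPart, if_neg (by omega)]
  have hnub : ∀ m : ℤ, (-1:ℤ) < m → PDO.negPart (PDO.pow (⇑d) P k) m = 0 := by
    intro m hm
    rw [PDO.negPart, if_neg (by omega)]
  have hnub' : ∀ m : ℤ, (k:ℤ) < m → PDO.negPart (PDO.pow (⇑d) P k) m = 0 := by
    intro m hm
    rw [PDO.negPart]
    split
    · exact hQub m hm
    · rfl
  have hdecomp : PDO.pow (⇑d) P k
      = PDO.posPart (PDO.pow (⇑d) P k) + PDO.negPart (PDO.pow (⇑d) P k) := by
    funext m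
    rw [Pi.add_apply, PDO.posPart, PDO.negPart]
    by_cases hm : 0 ≤ m
    · rw [if_pos hm, if_neg (by omega), add_zero]
    · rw [if_neg hm, if_pos (by omega), zero_add]
  have hLP : PDO.lax r u = PDO.pow (⇑d) P r := hProot.symm
  have hcomm : PDO.mul (⇑d) (PDO.pow (⇑d) P k) (PDO.lax r u)
      = PDO.mul (⇑d) (PDO.lax r u) (PDO.pow (⇑d) P k) := by
    rw [hLP]
    exact PDO.pow_comm' d P hPub k r
  have hsplitL : PDO.mul (⇑d) (PDO.pow (⇑d) P k) (PDO.lax r u)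
      = fun m => PDO.mul (⇑d) (PDO.posPart (PDO.pow (⇑d) P k)) (PDO.lax r u) m
          + PDO.mul (⇑d) (PDO.negPart (PDO.pow (⇑d) P k)) (PDO.lax r u) m := by
    conv_lhs => rw [hdecomp]
    exact PDO.mul_add_left d (PDO.lax r u) _ _ hLub hpub hnub'
  have hsplitR : PDO.mul (⇑d) (PDO.lax r u) (PDO.pow (⇑d) P k)
      = fun m => PDO.mul (⇑d) (PDO.lax r u) (PDO.posPart (PDO.pow (⇑d) P k)) m
          + PDO.mul (⇑d) (PDO.lax r u) (PDO.negPart (PDO.pow (⇑d) P k)) m := by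
    conv_lhs => rw [hdecomp]
    exact PDO.mul_add_right d (PDO.lax r u) _ _ hLub hpub hnub'
  have hkey : ∀ m : ℤ,
      PDO.mul (⇑d) (PDO.posPart (PDO.pow (⇑d) P k)) (PDO.lax r u) m
        + PDO.mul (⇑d) (PDO.negPart (PDO.pow (⇑d) P k)) (PDO.lax r u) m
      = PDO.mul (⇑d) (PDO.lax r u) (PDO.posPart (PDO.pow (⇑d) P k)) m
        + PDO.mul (⇑d) (PDO.lax r u) (PDO.negPart (PDO.pow (⇑d) P k)) m := by
    intro m
    have h1 := congrFun hsplitL m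
    have h2 := congrFun hsplitR m
    have h3 := congrFun hcomm m
    rw [h1, h2] at h3
    exact h3
  have hconc1 : PDO.bracket (⇑d) (PDO.posPart (PDO.pow (⇑d) P k)) (PDO.lax r u)
      = - PDO.bracket (⇑d) (PDO.negPart (PDO.pow (⇑d) P k)) (PDO.lax r u) := by
    funext m
    have := hkey m
    simp only [PDO.bracket, Pi.neg_apply, Pi.sub_apply]
    linear_combination this
  refine ⟨hconc1, ?_⟩
  intro m hm
  rcases hm with hm | hm
  · -- m < 0
    simp only [PDO.bracket, Pi.sub_apply]
    rw [PDO.diff_mul_vanish d _ _ hpub hppos hLub hLpos m hm,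
      PDO.diff_mul_vanish d _ _ hLub hLpos hpub hppos m hm, sub_self]
  · -- r - 2 < m
    rw [congrFun hconc1 m]
    simp only [PDO.bracket, Pi.neg_apply, Pi.sub_apply]
    by_cases hm2 : (r:ℤ) - 1 < m
    · rw [PDO.mul_ub d _ _ hnub hLub m (by omega),
        PDO.mul_ub d _ _ hLub hnub m (by omega), sub_self, neg_zero]
    · have hmr : m = (r:ℤ) - 1 := by omega
      subst hmr
      have h1 : PDO.mul (⇑d) (PDO.negPart (PDO.pow (⇑d) P k)) (PDO.lax r u) ((r:ℤ)-1)
          = PDO.negPart (PDO.pow (⇑d) P k) (-1) := by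
        rw [PDO.mul_eq_sum d _ _ hnub hLub ((r:ℤ)-1) (Finset.Icc ((r:ℤ)-1-(r:ℤ)) (-1))
          (le_refl _) 1 (by omega)]
        rw [show (r:ℤ)-1-(r:ℤ) = -1 by ring, Finset.Icc_self, Finset.sum_singleton,
          Finset.sum_range_one]
        rw [show (r:ℤ) - 1 + ((0:ℕ):ℤ) - (-1) = (r:ℤ) by omega]
        rw [Function.iterate_zero_apply, PDO.zbinom_zero, one_smul,
          show PDO.lax r u (r:ℤ) = 1 by rw [PDO.lax, if_pos rfl], mul_one]
      have h2 : PDO.mul (⇑d) (PDO.lax r u) (PDO.negPart (PDO.pow (⇑d) P k)) ((r:ℤ)-1)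
          = PDO.negPart (PDO.pow (⇑d) P k) (-1) := by
        rw [PDO.mul_eq_sum d _ _ hLub hnub ((r:ℤ)-1) (Finset.Icc ((r:ℤ)-1-(-1)) (r:ℤ))
          (le_refl _) 1 (by omega)]
        rw [show (r:ℤ)-1-(-1) = (r:ℤ) by ring, Finset.Icc_self, Finset.sum_singleton,
          Finset.sum_range_one]
        rw [show (r:ℤ) - 1 + ((0:ℕ):ℤ) - (r:ℤ) = -1 by omega]
        rw [Function.iterate_zero_apply, PDO.zbinom_zero, one_smul,
          show PDO.lax r u (r:ℤ) = 1 by rw [PDO.lax, if_pos rfl], one_mul]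
      rw [h1, h2, sub_self, neg_zero]
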